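/- arXiv:1206.5975 — 11 statements merged into one kernel-verified Lean document; each statement's English description precedes it below -/
import Mathlib

section
/- In a modular quantale, every left adjoint is a symmetric left adjoint: if f ⊣ g (i.e. 1 ≤ g*f and f*g ≤ 1), then g = f°. -/
theorem stmt_3 {Q : Type*} [CompleteLattice Q] [Monoid Q]
    (inv : Q → Q)
    (inv_mul : ∀ a b : Q, inv (a * b) = inv b * inv a)
    (inv_inv : ∀ a : Q, inv (inv a) = a)
    (inv_sSup : ∀ S : Set Q, inv (sSup S) = ⨆ a ∈ S, inv a)
    (mul_sSup : ∀ (a : Q) (S : Set Q), a * sSup S = ⨆ b ∈ S, a * b)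
    (sSup_mul : ∀ (a : Q) (S : Set Q), sSup S * a = ⨆ b ∈ S, b * a)
    (modular : ∀ f g h : Q, g * f ⊓ h ≤ g * (f ⊓ inv g * h))
    : ∀ f g : Q, 1 ≤ g * f → f * g ≤ 1 → g = inv f := by
  -- multiplication is monotone
  have hmul_left : ∀ a b c : Q, a ≤ b → c * a ≤ c * b := by
    intro a b c hab
    have h := mul_sSup c {a, b}
    rw [sSup_pair, sup_eq_right.mpr hab] at h
    rw [h]
    exact le_biSup (fun x => c * x) (by simp : a ∈ ({a, b} : Set Q))
  have hmul_right : ∀ a b c : Q, a ≤ b → a * c ≤ b * c := by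
    intro a b c hab
    have h := sSup_mul c {a, b}
    rw [sSup_pair, sup_eq_right.mpr hab] at h
    rw [h]
    exact le_biSup (fun x => x * c) (by simp : a ∈ ({a, b} : Set Q))
  -- inv is monotone
  have hinv_mono : ∀ a b : Q, a ≤ b → inv a ≤ inv b := by
    intro a b hab
    have h := inv_sSup {a, b}
    rw [sSup_pair, sup_eq_right.mpr hab] at h
    rw [h]
    exact le_biSup (fun x => inv x) (by simp : a ∈ ({a, b} : Set Q))
  -- inv 1 = 1
  have inv1 : inv (1 : Q) = 1 := by
    have h := inv_mul (inv 1) 1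
    rw [mul_one, inv_inv, mul_one] at h
    exact h.symm
  -- key lemma: any adjunction gives inv f ≤ g
  have key : ∀ f g : Q, 1 ≤ g * f → f * g ≤ 1 → inv f ≤ g := by
    intro f g h1 h2
    have hk1 : (1 : Q) ≤ g * (f ⊓ inv g * 1) :=
      le_trans (le_inf h1 le_rfl) (modular f g 1)
    rw [mul_one] at hk1
    have hfk : f ≤ f ⊓ inv g := by
      calc f = f * 1 := (mul_one f).symm
        _ ≤ f * (g * (f ⊓ inv g)) := hmul_left _ _ _ hk1
        _ = (f * g) * (f ⊓ inv g) := (mul_assoc _ _ _).symm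
        _ ≤ 1 * (f ⊓ inv g) := hmul_right _ _ _ h2
        _ = f ⊓ inv g := one_mul _
    have hfg : f ≤ inv g := le_trans hfk inf_le_right
    have := hinv_mono _ _ hfg
    rwa [inv_inv] at this
  intro f g h1 h2
  -- inv f ≤ g
  have le1 : inv f ≤ g := key f g h1 h2
  -- the adjunction (inv g, inv f)
  have h1' : (1 : Q) ≤ inv f * inv g := by
    have := hinv_mono _ _ h1
    rwa [inv1, inv_mul] at this
  have h2' : inv g * inv f ≤ 1 := by
    have := hinv_mono _ _ h2
    rwa [inv1, inv_mul] at this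
  have le2 : inv (inv g) ≤ inv f := key (inv g) (inv f) h1' h2'
  rw [inv_inv] at le2
  exact le_antisymm le2 le1
end

section
/- Any modular quantale is map-discrete: if f and g are left adjoints (i.e. each has a right adjoint) and f ≤ g, then f = g. -/
theorem stmt_4 {Q : Type*} [CompleteLattice Q] [Monoid Q]
    (inv : Q → Q)
    (inv_mul : ∀ a b : Q, inv (a * b) = inv b * inv a)
    (inv_inv : ∀ a : Q, inv (inv a) = a)
    (inv_sSup : ∀ S : Set Q, inv (sSup S) = ⨆ a ∈ S, inv a)
    (mul_sSup : ∀ (a : Q) (S : Set Q), a * sSup S = ⨆ b ∈ S, a * b)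
    (sSup_mul : ∀ (a : Q) (S : Set Q), sSup S * a = ⨆ b ∈ S, b * a)
    (modular : ∀ f g h : Q, g * f ⊓ h ≤ g * (f ⊓ inv g * h))
    : ∀ f g : Q,
      (∃ f' : Q, 1 ≤ f' * f ∧ f * f' ≤ 1) →
      (∃ g' : Q, 1 ≤ g' * g ∧ g * g' ≤ 1) →
      f ≤ g → f = g := by
  rintro f g ⟨f', hf1, hf2⟩ ⟨g', hg1, hg2⟩ hfg
  -- multiplication is monotone
  have pair_l : ∀ a b c : Q, a * (b ⊔ c) = a * b ⊔ a * c := by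
    intro a b c
    have := mul_sSup a {b, c}
    rw [sSup_pair, iSup_pair] at this; exact this
  have pair_r : ∀ a b c : Q, (b ⊔ c) * a = b * a ⊔ c * a := by
    intro a b c
    have := sSup_mul a {b, c}
    rw [sSup_pair, iSup_pair] at this; exact this
  have mono_l : ∀ a b c : Q, b ≤ c → a * b ≤ a * c := by
    intro a b c h
    have h2 : b ⊔ c = c := sup_eq_right.mpr h
    calc a * b ≤ a * b ⊔ a * c := le_sup_left
      _ = a * (b ⊔ c) := (pair_l a b c).symm
      _ = a * c := by rw [h2]
  have mono_r : ∀ a b c : Q, b ≤ c → b * a ≤ c * a := by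
    intro a b c h
    have h2 : b ⊔ c = c := sup_eq_right.mpr h
    calc b * a ≤ b * a ⊔ c * a := le_sup_left
      _ = (b ⊔ c) * a := (pair_r a b c).symm
      _ = c * a := by rw [h2]
  -- inv is monotone
  have inv_mono : ∀ a b : Q, a ≤ b → inv a ≤ inv b := by
    intro a b h
    have h2 : a ⊔ b = b := sup_eq_right.mpr h
    have key : inv (a ⊔ b) = inv a ⊔ inv b := by
      have := inv_sSup {a, b}
      rw [sSup_pair, iSup_pair] at this; exact this
    calc inv a ≤ inv a ⊔ inv b := le_sup_left
      _ = inv (a ⊔ b) := key.symm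
      _ = inv b := by rw [h2]
  -- inv 1 = 1
  have inv_one : inv (1 : Q) = 1 := by
    have h := inv_mul (inv 1) 1
    rw [mul_one, inv_inv, mul_one] at h
    exact h.symm
  -- Key lemma: if h is a right adjoint of a, then inv a ≤ h
  have L : ∀ a h : Q, 1 ≤ h * a → a * h ≤ 1 → inv a ≤ h := by
    intro a h h1 h2
    have step1 : inv a ≤ h * (a * inv a) := by
      calc inv a = 1 * inv a := (one_mul _).symm
        _ ≤ (h * a) * inv a := mono_r _ _ _ h1
        _ = h * (a * inv a) := by rw [mul_assoc]
    have step2 : inv a ≤ h * (a * inv a) ⊓ inv a := le_inf step1 le_rfl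
    have step3 : h * (a * inv a) ⊓ inv a ≤ h * (a * inv a ⊓ inv h * inv a) :=
      modular (a * inv a) h (inv a)
    have step4 : a * inv a ⊓ inv h * inv a ≤ 1 := by
      calc a * inv a ⊓ inv h * inv a ≤ inv h * inv a := inf_le_right
        _ = inv (a * h) := (inv_mul a h).symm
        _ ≤ inv 1 := inv_mono _ _ h2
        _ = 1 := inv_one
    calc inv a ≤ h * (a * inv a ⊓ inv h * inv a) := le_trans step2 step3
      _ ≤ h * 1 := mono_l _ _ _ step4
      _ = h := mul_one h
  -- inv f ≤ f', f' ≤ inv f, similarly for g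
  have hLf : inv f ≤ f' := L f f' hf1 hf2
  have hLg : inv g ≤ g' := L g g' hg1 hg2
  -- f' ≤ inv f : apply L to a := inv f', h := inv f
  have hRf : f' ≤ inv f := by
    have c1 : (1 : Q) ≤ inv f * inv f' := by
      calc (1 : Q) = inv 1 := inv_one.symm
        _ ≤ inv (f' * f) := inv_mono _ _ hf1
        _ = inv f * inv f' := inv_mul f' f
    have c2 : inv f' * inv f ≤ 1 := by
      calc inv f' * inv f = inv (f * f') := (inv_mul f f').symm
        _ ≤ inv 1 := inv_mono _ _ hf2
        _ = 1 := inv_one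
    have := L (inv f') (inv f) c1 c2
    rwa [inv_inv] at this
  -- g' ≤ f'
  have hgf : g' ≤ f' := by
    calc g' = 1 * g' := (one_mul _).symm
      _ ≤ (f' * f) * g' := mono_r _ _ _ hf1
      _ = f' * (f * g') := mul_assoc _ _ _
      _ ≤ f' * (g * g') := mono_l _ _ _ (mono_r _ _ _ hfg)
      _ ≤ f' * 1 := mono_l _ _ _ hg2
      _ = f' := mul_one _
  -- chain: inv g ≤ g' ≤ f' ≤ inv f, hence g ≤ f
  have hginvf : inv g ≤ inv f := le_trans hLg (le_trans hgf hRf)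
  have hgf2 : g ≤ f := by
    have := inv_mono _ _ hginvf
    rwa [inv_inv, inv_inv] at this
  exact le_antisymm hfg hgf2
end

section
/- In a modular quantale, if e is a symmetric idempotent (e*e = e and e° = e) which splits as e = q*p with p*q = 1, then the splitting is necessarily symmetric: q = p° and p = q°. -/
theorem stmt_5 {Q : Type*} [CompleteLattice Q] [Monoid Q]
    (inv : Q → Q)
    (inv_mul : ∀ a b : Q, inv (a * b) = inv b * inv a)
    (inv_inv : ∀ a : Q, inv (inv a) = a)
    (inv_sSup : ∀ S : Set Q, inv (sSup S) = ⨆ a ∈ S, inv a)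
    (mul_sSup : ∀ (a : Q) (S : Set Q), a * sSup S = ⨆ b ∈ S, a * b)
    (sSup_mul : ∀ (a : Q) (S : Set Q), sSup S * a = ⨆ b ∈ S, b * a)
    (modular : ∀ f g h : Q, g * f ⊓ h ≤ g * (f ⊓ inv g * h))
    : ∀ e p q : Q, e * e = e → inv e = e → e = q * p → p * q = 1 →
      q = inv p ∧ p = inv q := by
  -- monotonicity of multiplication
  have monoL : ∀ a b c : Q, a ≤ b → c * a ≤ c * b := by
    intro a b c hab
    have hs : sSup ({a, b} : Set Q) = b := by
      rw [sSup_pair, sup_eq_right.mpr hab]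
    have h := mul_sSup c {a, b}
    rw [hs] at h
    rw [h]
    exact le_iSup₂ (f := fun x (_ : x ∈ ({a, b} : Set Q)) => c * x) a
      (Set.mem_insert _ _)
  have monoR : ∀ a b c : Q, a ≤ b → a * c ≤ b * c := by
    intro a b c hab
    have hs : sSup ({a, b} : Set Q) = b := by
      rw [sSup_pair, sup_eq_right.mpr hab]
    have h := sSup_mul c {a, b}
    rw [hs] at h
    rw [h]
    exact le_iSup₂ (f := fun x (_ : x ∈ ({a, b} : Set Q)) => x * c) a
      (Set.mem_insert _ _)
  -- inv 1 = 1
  have inv_one : inv (1 : Q) = 1 := by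
    have h : ∀ a : Q, inv a = inv a * inv 1 := by
      intro a; conv_lhs => rw [← one_mul a, inv_mul]
    have h2 := h (inv 1)
    rw [inv_inv] at h2
    rw [one_mul] at h2
    exact h2.symm
  intro e p q he hesym hsplit hpq
  have hqp1 : inv q * inv p = 1 := by rw [← inv_mul, hpq, inv_one]
  have hesym' : inv p * inv q = q * p := by
    rw [← inv_mul, ← hsplit, hesym, hsplit]
  -- e * inv p = inv p
  have hep : (q * p) * inv p = inv p := by
    rw [← hesym', mul_assoc, hqp1, mul_one]
  -- e * q = q
  have heq : (q * p) * q = q := by rw [mul_assoc, hpq, mul_one]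
  -- 1 ≤ p * (q ⊓ inv p)
  have h1 : (1 : Q) ≤ p * (q ⊓ inv p) := by
    have := modular q p 1
    rw [hpq, mul_one, inf_idem] at this
    exact this
  -- 1 ≤ inv q * (inv p ⊓ q)
  have h2 : (1 : Q) ≤ inv q * (inv p ⊓ q) := by
    have := modular (inv p) (inv q) 1
    rw [hqp1, mul_one, inv_inv, inf_idem] at this
    exact this
  -- q ≤ inv p
  have hle1 : q ≤ inv p := by
    calc q = q * 1 := (mul_one q).symm
      _ ≤ q * (p * (q ⊓ inv p)) := monoL _ _ _ h1
      _ = (q * p) * (q ⊓ inv p) := (mul_assoc _ _ _).symm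
      _ ≤ (q * p) * inv p := monoL _ _ _ inf_le_right
      _ = inv p := hep
  -- inv p ≤ q
  have hle2 : inv p ≤ q := by
    calc inv p = inv p * 1 := (mul_one _).symm
      _ ≤ inv p * (inv q * (inv p ⊓ q)) := monoL _ _ _ h2
      _ = (inv p * inv q) * (inv p ⊓ q) := (mul_assoc _ _ _).symm
      _ = (q * p) * (inv p ⊓ q) := by rw [hesym']
      _ ≤ (q * p) * q := monoL _ _ _ inf_le_right
      _ = q := heq
  have hq : q = inv p := le_antisymm hle1 hle2
  exact ⟨hq, by rw [hq, inv_inv]⟩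
end

section
/- In a modular quantale, for any elements f, g with f*g° ≤ q, the element z := f°*f ⊓ g°*g satisfies: if f and g are simple (f*f° ≤ 1 and g*g° ≤ 1), then z is a symmetric idempotent (z° = z and z*z = z) and f*z*g° = f*g°. -/
theorem stmt_8 {Q : Type*} [CompleteLattice Q] [Monoid Q]
    (inv : Q → Q)
    (inv_mul : ∀ a b : Q, inv (a * b) = inv b * inv a)
    (inv_inv : ∀ a : Q, inv (inv a) = a)
    (inv_sSup : ∀ S : Set Q, inv (sSup S) = ⨆ a ∈ S, inv a)
    (mul_sSup : ∀ (a : Q) (S : Set Q), a * sSup S = ⨆ b ∈ S, a * b)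
    (sSup_mul : ∀ (a : Q) (S : Set Q), sSup S * a = ⨆ b ∈ S, b * a)
    (modular : ∀ f g h : Q, g * f ⊓ h ≤ g * (f ⊓ inv g * h))
    : ∀ f g q : Q, f * inv g ≤ q → f * inv f ≤ 1 → g * inv g ≤ 1 →
      inv (inv f * f ⊓ inv g * g) = inv f * f ⊓ inv g * g ∧
      (inv f * f ⊓ inv g * g) * (inv f * f ⊓ inv g * g) = inv f * f ⊓ inv g * g ∧
      f * (inv f * f ⊓ inv g * g) * inv g = f * inv g := by
  -- monotonicity of multiplication and involution
  have mulL : ∀ a b c : Q, b ≤ c → a * b ≤ a * c := by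
    intro a b c h
    have h1 : sSup {b, c} = c := by
      apply le_antisymm
      · exact sSup_le (by rintro x (rfl | rfl) <;> [exact h; exact le_rfl])
      · exact le_sSup (by simp)
    calc a * b ≤ ⨆ x ∈ ({b, c} : Set Q), a * x := le_biSup _ (by simp)
      _ = a * sSup {b, c} := (mul_sSup a _).symm
      _ = a * c := by rw [h1]
  have mulR : ∀ a b c : Q, b ≤ c → b * a ≤ c * a := by
    intro a b c h
    have h1 : sSup {b, c} = c := by
      apply le_antisymm
      · exact sSup_le (by rintro x (rfl | rfl) <;> [exact h; exact le_rfl])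
      · exact le_sSup (by simp)
    calc b * a ≤ ⨆ x ∈ ({b, c} : Set Q), x * a := le_biSup (fun x => x * a) (Set.mem_insert _ _)
      _ = sSup {b, c} * a := (sSup_mul a _).symm
      _ = c * a := by rw [h1]
  have invMono : ∀ a b : Q, a ≤ b → inv a ≤ inv b := by
    intro a b h
    have h1 : sSup {a, b} = b := by
      apply le_antisymm
      · exact sSup_le (by rintro x (rfl | rfl) <;> [exact h; exact le_rfl])
      · exact le_sSup (by simp)
    calc inv a ≤ ⨆ x ∈ ({a, b} : Set Q), inv x := le_biSup _ (by simp)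
      _ = inv (sSup {a, b}) := (inv_sSup _).symm
      _ = inv b := by rw [h1]
  have invInf : ∀ a b : Q, inv (a ⊓ b) = inv a ⊓ inv b := by
    intro a b
    apply le_antisymm
    · exact le_inf (invMono _ _ inf_le_left) (invMono _ _ inf_le_right)
    · have h1 : inv (inv a ⊓ inv b) ≤ a ⊓ b :=
        le_inf (by simpa [inv_inv] using invMono _ _ (inf_le_left : inv a ⊓ inv b ≤ inv a))
               (by simpa [inv_inv] using invMono _ _ (inf_le_right : inv a ⊓ inv b ≤ inv b))
      have := invMono _ _ h1
      rwa [inv_inv] at this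
  -- right modular law
  have rmod : ∀ a b c : Q, a * b ⊓ c ≤ (a ⊓ c * inv b) * b := by
    intro a b c
    have h := modular (inv a) (inv b) (inv c)
    rw [inv_inv] at h
    have h2 := invMono _ _ h
    simp only [invInf, inv_mul, inv_inv] at h2
    exact h2
  intro f g q hq hf hg
  set z : Q := inv f * f ⊓ inv g * g with hz
  have hzf : z ≤ inv f * f := inf_le_left
  have hzg : z ≤ inv g * g := inf_le_right
  -- z is symmetric
  have hsym : inv z = z := by
    rw [hz, invInf, inv_mul, inv_mul, inv_inv, inv_inv]
  -- z*z ≤ f°f and g°g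
  have hzzf : z * z ≤ inv f * f := by
    calc z * z ≤ (inv f * f) * (inv f * f) :=
          le_trans (mulL _ _ _ hzf) (mulR _ _ _ hzf)
      _ = inv f * (f * inv f) * f := by rw [mul_assoc, mul_assoc, mul_assoc]
      _ ≤ inv f * 1 * f := mulR _ _ _ (mulL _ _ _ hf)
      _ = inv f * f := by rw [mul_one]
  have hzzg : z * z ≤ inv g * g := by
    calc z * z ≤ (inv g * g) * (inv g * g) :=
          le_trans (mulL _ _ _ hzg) (mulR _ _ _ hzg)
      _ = inv g * (g * inv g) * g := by rw [mul_assoc, mul_assoc, mul_assoc]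
      _ ≤ inv g * 1 * g := mulR _ _ _ (mulL _ _ _ hg)
      _ = inv g * g := by rw [mul_one]
  have hzz_le : z * z ≤ z := le_inf hzzf hzzg
  -- z ≤ f°f * z
  have hzffz : z ≤ inv f * f * z := by
    have h := modular f (inv f) z
    rw [inv_inv] at h
    have h1 : inv f * f ⊓ z = z := inf_eq_right.mpr hzf
    rw [h1] at h
    calc z ≤ inv f * (f ⊓ f * z) := h
      _ ≤ inv f * (f * z) := mulL _ _ _ inf_le_right
      _ = inv f * f * z := (mul_assoc _ _ _).symm
  -- z ≤ z*z
  have hle_zz : z ≤ z * z := by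
    have h := rmod (inv f * f) z z
    rw [hsym] at h
    have h1 : inv f * f * z ⊓ z = z := inf_eq_right.mpr hzffz
    rw [h1] at h
    calc z ≤ (inv f * f ⊓ z * z) * z := h
      _ ≤ z * z := mulR _ _ _ (le_inf inf_le_left (le_trans inf_le_right hzzg))
  refine ⟨hsym, le_antisymm hzz_le hle_zz, le_antisymm ?_ ?_⟩
  · calc f * z * inv g ≤ f * (inv f * f) * inv g :=
          mulR _ _ _ (mulL _ _ _ hzf)
      _ = (f * inv f) * (f * inv g) := by rw [mul_assoc, mul_assoc, mul_assoc]
      _ ≤ 1 * (f * inv g) := mulR _ _ _ hf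
      _ = f * inv g := one_mul _
  · have h := modular (inv g) f (f * inv g)
    rw [inf_idem] at h
    have h2 := rmod (inv f * f) (inv g) (inv g)
    rw [inv_inv] at h2
    calc f * inv g ≤ f * (inv g ⊓ inv f * (f * inv g)) := h
      _ = f * (inv f * f * inv g ⊓ inv g) := by
          rw [mul_assoc, inf_comm]
      _ ≤ f * ((inv f * f ⊓ inv g * g) * inv g) := mulL _ _ _ h2
      _ = f * z * inv g := by rw [hz, mul_assoc]
end

section
/- Every modular quantale is stably Gelfand: for any f, if f*f°*f ≤ f then f ≤ f*f°*f (hence f = f*f°*f). -/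
theorem stmt_10 {Q : Type*} [CompleteLattice Q] [Monoid Q]
    (inv : Q → Q)
    (inv_mul : ∀ a b : Q, inv (a * b) = inv b * inv a)
    (inv_inv : ∀ a : Q, inv (inv a) = a)
    (inv_sSup : ∀ S : Set Q, inv (sSup S) = ⨆ a ∈ S, inv a)
    (mul_sSup : ∀ (a : Q) (S : Set Q), a * sSup S = ⨆ b ∈ S, a * b)
    (sSup_mul : ∀ (a : Q) (S : Set Q), sSup S * a = ⨆ b ∈ S, b * a)
    (modular : ∀ f g h : Q, g * f ⊓ h ≤ g * (f ⊓ inv g * h))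
    : ∀ f : Q, f * inv f * f ≤ f → f ≤ f * inv f * f := by
  have mono : ∀ a b c : Q, b ≤ c → a * b ≤ a * c := by
    intro a b c hbc
    have h1 : a * sSup {b, c} = ⨆ x ∈ ({b, c} : Set Q), a * x := mul_sSup a {b, c}
    rw [sSup_pair, sup_eq_right.mpr hbc, iSup_pair] at h1
    rw [h1]
    exact le_sup_left
  intro f _
  have h := modular 1 f f
  rw [mul_one] at h
  have h2 : f ≤ f * (1 ⊓ inv f * f) := le_trans (le_inf le_rfl le_rfl) h
  calc f ≤ f * (1 ⊓ inv f * f) := h2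
    _ ≤ f * (inv f * f) := mono f _ _ inf_le_right
    _ = f * inv f * f := (mul_assoc f (inv f) f).symm
end

section
/- A modular quantal frame Q in which the top element is weakly semi-simple (⊤ = ⋁{f*g° : f, g simple}) has every element weakly semi-simple: for all q ∈ Q, q = ⋁{h*g° : h*g° ≤ q, h and g simple}. -/
/-! Meet `q = q ⊓ ⊤` with the decomposition of `⊤` and use the frame law to split it into the
pieces `q ⊓ f * g°` with `f, g` simple. For each piece, modularity on both sides gives
`q ⊓ f * g° ≤ h * g°` with `h = f * (f° * q * g ⊓ 1)`; this `h` is again simple, and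
`h * g° ≤ f * f° * q * g * g° ≤ q`, so every piece lies below a simple decomposition under `q`. -/

theorem monotone_of_map_sSup {α β : Type*} [CompleteLattice α] [CompleteLattice β] {f : α → β}
    (hf : ∀ S : Set α, f (sSup S) = ⨆ a ∈ S, f a) : Monotone f := by
  intro a b hab
  have hpair := hf {a, b}
  rw [sSup_pair, iSup_pair, sup_eq_right.2 hab] at hpair
  exact le_sup_left.trans hpair.ge

structure IsQuantaleInvolution {Q : Type*} [Monoid Q] [Preorder Q] (inv : Q → Q) : Prop where
  map_mul : ∀ a b : Q, inv (a * b) = inv b * inv a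
  involutive : ∀ a : Q, inv (inv a) = a
  monotone : Monotone inv

namespace IsQuantaleInvolution

variable {Q : Type*} [Monoid Q] {inv : Q → Q}

theorem map_one [Preorder Q] (hi : IsQuantaleInvolution inv) : inv 1 = 1 := by
  simpa [hi.involutive] using (hi.map_mul (inv 1) 1).symm

theorem map_inf [Lattice Q] (hi : IsQuantaleInvolution inv) (a b : Q) :
    inv (a ⊓ b) = inv a ⊓ inv b := by
  refine le_antisymm (le_inf (hi.monotone inf_le_left) (hi.monotone inf_le_right)) ?_
  calc inv a ⊓ inv b = inv (inv (inv a ⊓ inv b)) := (hi.involutive _).symm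
    _ ≤ inv (a ⊓ b) := hi.monotone <| le_inf
        ((hi.monotone inf_le_left).trans_eq (hi.involutive a))
        ((hi.monotone inf_le_right).trans_eq (hi.involutive b))

theorem mul_le_mul_right [Preorder Q] (hi : IsQuantaleInvolution inv)
    (hmul : ∀ c : Q, Monotone (c * ·)) {a b : Q} (hab : a ≤ b) (c : Q) : a * c ≤ b * c :=
  calc a * c = inv (inv c * inv a) := by rw [hi.map_mul, hi.involutive, hi.involutive]
    _ ≤ inv (inv c * inv b) := hi.monotone (hmul _ (hi.monotone hab))
    _ = b * c := by rw [hi.map_mul, hi.involutive, hi.involutive]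

/-- The involution turns the modular law into its right-handed form. -/
theorem mul_inf_le_inf_mul_mul [Lattice Q] (hi : IsQuantaleInvolution inv)
    (modular : ∀ f g h : Q, g * f ⊓ h ≤ g * (f ⊓ inv g * h)) (a b c : Q) :
    a * b ⊓ c ≤ (a ⊓ c * inv b) * b := by
  have h := hi.monotone (modular (inv a) (inv b) (inv c))
  simpa only [hi.map_mul, hi.map_inf, hi.involutive] using h

theorem inf_mul_inv_le [Lattice Q] (hi : IsQuantaleInvolution inv)
    (hmul : ∀ c : Q, Monotone (c * ·))
    (modular : ∀ f g h : Q, g * f ⊓ h ≤ g * (f ⊓ inv g * h)) (q f g : Q) :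
    q ⊓ f * inv g ≤ f * (inv f * q * g ⊓ 1) * inv g := by
  have hright : inv g ⊓ inv f * q ≤ (inv f * q * g ⊓ 1) * inv g := by
    simpa only [one_mul, hi.involutive, mul_assoc, inf_comm] using
      hi.mul_inf_le_inf_mul_mul modular 1 (inv g) (inv f * q)
  calc q ⊓ f * inv g = f * inv g ⊓ q := inf_comm _ _
    _ ≤ f * (inv g ⊓ inv f * q) := modular (inv g) f q
    _ ≤ f * ((inv f * q * g ⊓ 1) * inv g) := hmul f hright
    _ = f * (inv f * q * g ⊓ 1) * inv g := (mul_assoc _ _ _).symm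

theorem mul_inf_one_mul_inv_le [Lattice Q] (hi : IsQuantaleInvolution inv)
    (hmul : ∀ c : Q, Monotone (c * ·)) {f g : Q} (hf : f * inv f ≤ 1) (hg : g * inv g ≤ 1)
    (q : Q) : f * (inv f * q * g ⊓ 1) * inv g ≤ q :=
  calc f * (inv f * q * g ⊓ 1) * inv g ≤ f * (inv f * q * g) * inv g :=
        hi.mul_le_mul_right hmul (hmul f inf_le_left) _
    _ = f * inv f * q * (g * inv g) := by simp only [mul_assoc]
    _ ≤ 1 * q * 1 := (hi.mul_le_mul_right hmul (hi.mul_le_mul_right hmul hf q) _).trans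
        (hmul _ hg)
    _ = q := by rw [one_mul, mul_one]

theorem mul_inf_one_mul_inv_self_le_one [Lattice Q] (hi : IsQuantaleInvolution inv)
    (hmul : ∀ c : Q, Monotone (c * ·)) {f : Q} (hf : f * inv f ≤ 1) (p : Q) :
    f * (p ⊓ 1) * inv (f * (p ⊓ 1)) ≤ 1 := by
  have hinv_le : inv (p ⊓ 1) ≤ 1 := (hi.monotone inf_le_right).trans_eq hi.map_one
  calc f * (p ⊓ 1) * inv (f * (p ⊓ 1)) = f * ((p ⊓ 1) * (inv (p ⊓ 1) * inv f)) := by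
        rw [hi.map_mul, mul_assoc]
    _ ≤ f * (1 * (1 * inv f)) := hmul f <| (hi.mul_le_mul_right hmul inf_le_right _).trans
        (hmul 1 (hi.mul_le_mul_right hmul hinv_le _))
    _ ≤ 1 := by rwa [one_mul, one_mul]

end IsQuantaleInvolution

theorem stmt_12_general {Q : Type*} [Order.Frame Q] [Monoid Q]
    (inv : Q → Q)
    (inv_mul : ∀ a b : Q, inv (a * b) = inv b * inv a)
    (inv_inv : ∀ a : Q, inv (inv a) = a)
    (inv_sSup : ∀ S : Set Q, inv (sSup S) = ⨆ a ∈ S, inv a)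
    (mul_sSup : ∀ (a : Q) (S : Set Q), a * sSup S = ⨆ b ∈ S, a * b)
    (modular : ∀ f g h : Q, g * f ⊓ h ≤ g * (f ⊓ inv g * h))
    (htop : (⊤ : Q) = sSup {x : Q | ∃ f g : Q, f * inv f ≤ 1 ∧ g * inv g ≤ 1 ∧ x = f * inv g}) :
    ∀ q : Q, q = sSup {x : Q | ∃ h g : Q, h * inv h ≤ 1 ∧ g * inv g ≤ 1 ∧ x = h * inv g ∧ x ≤ q} := by
  have hi : IsQuantaleInvolution inv := ⟨inv_mul, inv_inv, monotone_of_map_sSup inv_sSup⟩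
  have hmul (c : Q) : Monotone (c * ·) := monotone_of_map_sSup (mul_sSup c)
  intro q
  refine le_antisymm ?_ (sSup_le fun x ⟨_, _, _, _, _, hxq⟩ => hxq)
  calc q = q ⊓ ⊤ := (inf_top_eq q).symm
    _ = ⨆ x ∈ {x : Q | ∃ f g : Q, f * inv f ≤ 1 ∧ g * inv g ≤ 1 ∧ x = f * inv g}, q ⊓ x := by
        rw [htop, inf_sSup_eq]
    _ ≤ _ := iSup₂_le fun x ⟨f, g, hf, hg, hx⟩ => hx ▸
        (hi.inf_mul_inv_le hmul modular q f g).trans (le_sSup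
          ⟨_, g, hi.mul_inf_one_mul_inv_self_le_one hmul hf _, hg, rfl, hi.mul_inf_one_mul_inv_le hmul hf hg q⟩)

theorem stmt_12 {Q : Type*} [Order.Frame Q] [Monoid Q]
    (inv : Q → Q)
    (inv_mul : ∀ a b : Q, inv (a * b) = inv b * inv a)
    (inv_inv : ∀ a : Q, inv (inv a) = a)
    (inv_sSup : ∀ S : Set Q, inv (sSup S) = ⨆ a ∈ S, inv a)
    (mul_sSup : ∀ (a : Q) (S : Set Q), a * sSup S = ⨆ b ∈ S, a * b)
    (sSup_mul : ∀ (a : Q) (S : Set Q), sSup S * a = ⨆ b ∈ S, b * a)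
    (modular : ∀ f g h : Q, g * f ⊓ h ≤ g * (f ⊓ inv g * h))
    (htop : (⊤ : Q) = sSup {x : Q | ∃ f g : Q, f * inv f ≤ 1 ∧ g * inv g ≤ 1 ∧ x = f * inv g}) :
    ∀ q : Q, q = sSup {x : Q | ∃ h g : Q, h * inv h ≤ 1 ∧ g * inv g ≤ 1 ∧ x = h * inv g ∧ x ≤ q} :=
  stmt_12_general inv inv_mul inv_inv inv_sSup mul_sSup modular htop
end

section
/- In a modular quantal frame, for any element q and simple elements f, g: q ⊓ f*g° = (f*(f°*q*g ⊓ 1))*g°, and the element f*(f°*q*g ⊓ 1) is simple. -/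
theorem stmt_13 {Q : Type*} [Order.Frame Q] [Monoid Q]
    (inv : Q → Q)
    (inv_mul : ∀ a b : Q, inv (a * b) = inv b * inv a)
    (inv_inv : ∀ a : Q, inv (inv a) = a)
    (inv_sSup : ∀ S : Set Q, inv (sSup S) = ⨆ a ∈ S, inv a)
    (mul_sSup : ∀ (a : Q) (S : Set Q), a * sSup S = ⨆ b ∈ S, a * b)
    (sSup_mul : ∀ (a : Q) (S : Set Q), sSup S * a = ⨆ b ∈ S, b * a)
    (modular : ∀ f g h : Q, g * f ⊓ h ≤ g * (f ⊓ inv g * h))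
    : ∀ q f g : Q, f * inv f ≤ 1 → g * inv g ≤ 1 →
      q ⊓ f * inv g = (f * (inv f * q * g ⊓ 1)) * inv g ∧
      (f * (inv f * q * g ⊓ 1)) * inv (f * (inv f * q * g ⊓ 1)) ≤ 1 := by
  intro q f g hf hg
  have hsup : ∀ a b : Q, a ≤ b → sSup {a, b} = b := by
    intro a b h; rw [sSup_pair, sup_eq_right.mpr h]
  have mulL : ∀ a b c : Q, b ≤ c → a * b ≤ a * c := by
    intro a b c h
    have h2 := mul_sSup a {b, c}
    rw [hsup b c h] at h2
    rw [h2]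
    exact le_biSup (fun x => a * x) (by simp)
  have mulR : ∀ a b c : Q, b ≤ c → b * a ≤ c * a := by
    intro a b c h
    have h2 := sSup_mul a {b, c}
    rw [hsup b c h] at h2
    rw [h2]
    exact le_biSup (fun x => x * a) (by simp)
  have invmono : ∀ a b : Q, a ≤ b → inv a ≤ inv b := by
    intro a b h
    have h2 := inv_sSup {a, b}
    rw [hsup a b h] at h2
    rw [h2]
    exact le_biSup (fun x => inv x) (by simp)
  have inv_one : inv (1 : Q) = 1 := by
    have h1 : inv (1 : Q) * 1 = 1 := by
      calc inv (1:Q) * 1 = inv 1 * inv (inv 1) := by rw [inv_inv]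
        _ = inv (inv 1 * 1) := (inv_mul _ _).symm
        _ = 1 := by rw [mul_one, inv_inv]
    rwa [mul_one] at h1
  have inv_inf : ∀ a b : Q, inv (a ⊓ b) = inv a ⊓ inv b := by
    intro a b
    apply le_antisymm
    · exact le_inf (invmono _ _ inf_le_left) (invmono _ _ inf_le_right)
    · have h1 : inv (inv a ⊓ inv b) ≤ a ⊓ b := by
        apply le_inf
        · have := invmono _ _ (inf_le_left : inv a ⊓ inv b ≤ inv a)
          rwa [inv_inv] at this
        · have := invmono _ _ (inf_le_right : inv a ⊓ inv b ≤ inv b)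
          rwa [inv_inv] at this
      have h2 := invmono _ _ h1
      rwa [inv_inv] at h2
  have modular' : ∀ a b h : Q, a * b ⊓ h ≤ (a ⊓ h * inv b) * b := by
    intro a b h
    have h1 : inv (a * b ⊓ h) ≤ inv b * (inv a ⊓ b * inv h) := by
      rw [inv_inf, inv_mul]
      have := modular (inv a) (inv b) (inv h)
      rwa [inv_inv] at this
    have h2 := invmono _ _ h1
    rw [inv_inv] at h2
    calc a * b ⊓ h ≤ inv (inv b * (inv a ⊓ b * inv h)) := h2
      _ = (a ⊓ h * inv b) * b := by
          rw [inv_mul, inv_inf, inv_inv, inv_mul, inv_inv, inv_inv]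
  set m : Q := inv f * q * g ⊓ 1 with hm
  have hm1 : m ≤ 1 := inf_le_right
  have hm2 : m ≤ inv f * q * g := inf_le_left
  -- upper bound direction
  have lepart : q ⊓ f * inv g ≤ f * m * inv g := by
    have step1 : q ⊓ f * inv g ≤ f * (inv g ⊓ inv f * q) := by
      rw [inf_comm]; exact modular (inv g) f q
    have step2 : inv g ⊓ inv f * q ≤ m * inv g := by
      have h3 := modular' 1 (inv g) (inv f * q)
      rw [one_mul, inv_inv] at h3
      calc inv g ⊓ inv f * q ≤ (1 ⊓ inv f * q * g) * inv g := h3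
        _ = m * inv g := by rw [hm, inf_comm]
    calc q ⊓ f * inv g ≤ f * (inv g ⊓ inv f * q) := step1
      _ ≤ f * (m * inv g) := mulL _ _ _ step2
      _ = f * m * inv g := (mul_assoc _ _ _).symm
  have part1 : f * m * inv g ≤ q := by
    have A : f * m ≤ q * g := by
      calc f * m ≤ f * (inv f * q * g) := mulL _ _ _ hm2
        _ = (f * inv f) * (q * g) := by simp only [mul_assoc]
        _ ≤ 1 * (q * g) := mulR _ _ _ hf
        _ = q * g := one_mul _
    calc f * m * inv g ≤ (q * g) * inv g := mulR _ _ _ A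
      _ = q * (g * inv g) := mul_assoc _ _ _
      _ ≤ q * 1 := mulL _ _ _ hg
      _ = q := mul_one _
  have part2 : f * m * inv g ≤ f * inv g := by
    have A : f * m ≤ f := by
      calc f * m ≤ f * 1 := mulL _ _ _ hm1
        _ = f := mul_one _
    exact mulR _ _ _ A
  constructor
  · exact le_antisymm lepart (le_inf part1 part2)
  · have hminv : inv m ≤ 1 := by
      have := invmono _ _ hm1
      rwa [inv_one] at this
    have hmm : m * inv m ≤ 1 := by
      calc m * inv m ≤ 1 * inv m := mulR _ _ _ hm1
        _ = inv m := one_mul _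
        _ ≤ 1 := hminv
    calc f * m * inv (f * m) = f * (m * inv m) * inv f := by
          rw [inv_mul]; simp only [mul_assoc]
      _ ≤ f * 1 * inv f := mulR _ _ _ (mulL _ _ _ hmm)
      _ = f * inv f := by rw [mul_one]
      _ ≤ 1 := hf
end

section
/- In a modular quantale, if t := g°*e*g where e is a symmetric idempotent (e = e² = e°) and g is a left adjoint with g ≤ e*g, then t is a symmetric monad: t° = t, t*t ≤ t, and 1 ≤ t. -/
theorem stmt_16 {Q : Type*} [CompleteLattice Q] [Monoid Q]
    (inv : Q → Q)
    (inv_mul : ∀ a b : Q, inv (a * b) = inv b * inv a)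
    (inv_inv : ∀ a : Q, inv (inv a) = a)
    (inv_sSup : ∀ S : Set Q, inv (sSup S) = ⨆ a ∈ S, inv a)
    (mul_sSup : ∀ (a : Q) (S : Set Q), a * sSup S = ⨆ b ∈ S, a * b)
    (sSup_mul : ∀ (a : Q) (S : Set Q), sSup S * a = ⨆ b ∈ S, b * a)
    (modular : ∀ f g h : Q, g * f ⊓ h ≤ g * (f ⊓ inv g * h))
    : ∀ e g : Q, e * e = e → inv e = e →
      1 ≤ inv g * g → g * inv g ≤ 1 → g ≤ e * g →
      inv (inv g * e * g) = inv g * e * g ∧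
      (inv g * e * g) * (inv g * e * g) ≤ inv g * e * g ∧
      1 ≤ inv g * e * g := by
  have mul_le_left : ∀ a b c : Q, a ≤ b → c * a ≤ c * b := by
    intro a b c hab
    have h : sSup {a, b} = b := by
      simp [sSup_pair, sup_eq_right.mpr hab]
    calc c * a ≤ ⨆ x ∈ ({a, b} : Set Q), c * x := by
          exact le_biSup (fun x => c * x) (by simp)
      _ = c * b := by rw [← mul_sSup, h]
  have mul_le_right : ∀ a b c : Q, a ≤ b → a * c ≤ b * c := by
    intro a b c hab
    have h : sSup {a, b} = b := by
      simp [sSup_pair, sup_eq_right.mpr hab]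
    calc a * c ≤ ⨆ x ∈ ({a, b} : Set Q), x * c := by
          exact le_biSup (fun x => x * c) (by simp)
      _ = b * c := by rw [← sSup_mul, h]
  intro e g hee he h1 h2 h3
  refine ⟨?_, ?_, ?_⟩
  · rw [inv_mul, inv_mul, inv_inv, he, mul_assoc]
  · calc (inv g * e * g) * (inv g * e * g)
        = inv g * e * (g * inv g) * (e * g) := by
          simp [mul_assoc]
      _ ≤ inv g * e * 1 * (e * g) := mul_le_right _ _ _ (mul_le_left _ _ _ h2)
      _ = inv g * (e * e) * g := by simp [mul_assoc]
      _ = inv g * e * g := by rw [hee]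
  · calc (1 : Q) ≤ inv g * g := h1
      _ ≤ inv g * (e * g) := mul_le_left _ _ _ h3
      _ = inv g * e * g := (mul_assoc _ _ _).symm
end

section
/- In a modular quantale, if e is a symmetric idempotent, and (f, g) satisfy f*g° = 1 ⊓ e with f, g left adjoints (f*f° ≤ 1 ≤ f°*f, g*g° ≤ 1 ≤ g°*g), then e = (e*g)*(e*g)°. -/
theorem stmt_17 {Q : Type*} [CompleteLattice Q] [Monoid Q]
    (inv : Q → Q)
    (inv_mul : ∀ a b : Q, inv (a * b) = inv b * inv a)
    (inv_inv : ∀ a : Q, inv (inv a) = a)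
    (inv_sSup : ∀ S : Set Q, inv (sSup S) = ⨆ a ∈ S, inv a)
    (mul_sSup : ∀ (a : Q) (S : Set Q), a * sSup S = ⨆ b ∈ S, a * b)
    (sSup_mul : ∀ (a : Q) (S : Set Q), sSup S * a = ⨆ b ∈ S, b * a)
    (modular : ∀ f g h : Q, g * f ⊓ h ≤ g * (f ⊓ inv g * h))
    : ∀ e f g : Q, e * e = e → inv e = e →
      f * inv f ≤ 1 → 1 ≤ inv f * f →
      g * inv g ≤ 1 → 1 ≤ inv g * g →
      f * inv g = 1 ⊓ e →
      e = (e * g) * inv (e * g) := by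
  intro e f g hee hinve hf1 h1f hg1 h1g hfg
  -- multiplication is monotone
  have mulL : ∀ a b c : Q, a ≤ b → c * a ≤ c * b := by
    intro a b c hab
    have h := mul_sSup c {a, b}
    rw [sSup_pair, sup_eq_right.mpr hab] at h
    rw [h]
    exact le_iSup₂_of_le a (by simp) le_rfl
  have mulR : ∀ a b c : Q, a ≤ b → a * c ≤ b * c := by
    intro a b c hab
    have h := sSup_mul c {a, b}
    rw [sSup_pair, sup_eq_right.mpr hab] at h
    rw [h]
    exact le_iSup₂_of_le a (by simp) le_rfl
  have invM : ∀ a b : Q, a ≤ b → inv a ≤ inv b := by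
    intro a b hab
    have h := inv_sSup {a, b}
    rw [sSup_pair, sup_eq_right.mpr hab] at h
    rw [h]
    exact le_iSup₂_of_le a (by simp) le_rfl
  -- inv preserves inf
  have invInf : ∀ a b : Q, inv (a ⊓ b) = inv a ⊓ inv b := by
    intro a b
    refine le_antisymm (le_inf (invM _ _ inf_le_left) (invM _ _ inf_le_right)) ?_
    have h : inv (inv a ⊓ inv b) ≤ a ⊓ b :=
      le_inf (by simpa [inv_inv] using invM _ _ (inf_le_left : inv a ⊓ inv b ≤ inv a))
             (by simpa [inv_inv] using invM _ _ (inf_le_right : inv a ⊓ inv b ≤ inv b))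
    simpa [inv_inv] using invM _ _ h
  have inv1 : inv 1 = 1 := by
    have h := inv_mul (inv 1) 1
    rw [mul_one, inv_inv] at h
    rw [mul_one] at h
    exact h.symm
  -- dual modular law
  have dmod : ∀ a b c : Q, a * b ⊓ c ≤ (a ⊓ c * inv b) * b := by
    intro a b c
    have h := modular (inv a) (inv b) (inv c)
    have h2 := invM _ _ h
    simpa [invInf, inv_mul, inv_inv] using h2
  -- f = g
  have hfg' : f = g := by
    refine le_antisymm ?_ ?_
    · calc f = f * 1 := (mul_one f).symm
        _ ≤ f * (inv g * g) := mulL _ _ _ h1g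
        _ = (f * inv g) * g := (mul_assoc _ _ _).symm
        _ = (1 ⊓ e) * g := by rw [hfg]
        _ ≤ 1 * g := mulR _ _ _ inf_le_left
        _ = g := one_mul g
    · have hg' : inv g ≤ inv f := by
        calc inv g = 1 * inv g := (one_mul _).symm
          _ ≤ (inv f * f) * inv g := mulR _ _ _ h1f
          _ = inv f * (f * inv g) := mul_assoc _ _ _
          _ = inv f * (1 ⊓ e) := by rw [hfg]
          _ ≤ inv f * 1 := mulL _ _ _ inf_le_left
          _ = inv f := mul_one _
      calc g = inv (inv g) := (inv_inv g).symm
        _ ≤ inv (inv f) := invM _ _ hg'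
        _ = f := inv_inv f
  -- forward inequality
  have step1 : e ≤ e * ((1 ⊓ e) * e) := by
    have h1 : e * (1 * e) ⊓ e ≤ e * ((1 * e) ⊓ inv e * e) := modular (1 * e) e e
    have h2 : (1 : Q) * e ⊓ inv e * e ≤ (1 ⊓ (inv e * e) * inv e) * e := dmod 1 e (inv e * e)
    have h3 : e * (1 * e) ⊓ e = e := by rw [one_mul, hee, inf_idem]
    calc e = e * (1 * e) ⊓ e := h3.symm
      _ ≤ e * ((1 * e) ⊓ inv e * e) := h1
      _ ≤ e * ((1 ⊓ (inv e * e) * inv e) * e) := mulL _ _ _ h2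
      _ = e * ((1 ⊓ e) * e) := by rw [hinve, hee, hee]
  have fwd : e ≤ (e * g) * inv (e * g) := by
    have : e * ((1 ⊓ e) * e) = (e * g) * inv (e * g) := by
      rw [← hfg, inv_mul, hinve, hfg']
      simp [mul_assoc]
    exact this ▸ step1
  have bwd : (e * g) * inv (e * g) ≤ e := by
    have h : (e * g) * inv (e * g) = e * ((g * inv g) * e) := by
      rw [inv_mul, hinve]; simp [mul_assoc]
    rw [h]
    calc e * ((g * inv g) * e) ≤ e * (1 * e) := mulL _ _ _ (mulR _ _ _ hg1)
      _ = e := by rw [one_mul, hee]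
  exact le_antisymm fwd bwd
end

section
/- In an involutive quantale, if e is a symmetric idempotent, f is a left adjoint with f*g° = 1 ⊓ e and g°*g ⊓ f°*f = 1 for a left adjoint g, then g ≤ e*f, f ≤ e*g, g ≤ e*g, and e*g = e*f. -/
theorem stmt_18 {Q : Type*} [CompleteLattice Q] [Monoid Q]
    (inv : Q → Q)
    (inv_mul : ∀ a b : Q, inv (a * b) = inv b * inv a)
    (inv_inv : ∀ a : Q, inv (inv a) = a)
    (inv_sSup : ∀ S : Set Q, inv (sSup S) = ⨆ a ∈ S, inv a)
    (mul_sSup : ∀ (a : Q) (S : Set Q), a * sSup S = ⨆ b ∈ S, a * b)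
    (sSup_mul : ∀ (a : Q) (S : Set Q), sSup S * a = ⨆ b ∈ S, b * a)
    (modular : ∀ f g h : Q, g * f ⊓ h ≤ g * (f ⊓ inv g * h))
    : ∀ e f g : Q, e * e = e → inv e = e →
      f * inv f ≤ 1 → 1 ≤ inv f * f →
      g * inv g ≤ 1 → 1 ≤ inv g * g →
      f * inv g = 1 ⊓ e →
      inv g * g ⊓ inv f * f = 1 →
      g ≤ e * f ∧ f ≤ e * g ∧ g ≤ e * g ∧ e * g = e * f := by
  intro e f g hee he _hf hf' _hg hg' hfg _hmeet
  -- monotonicity of multiplication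
  have mulle : ∀ a b c : Q, b ≤ c → a * b ≤ a * c := by
    intro a b c h
    have : a * sSup {b, c} = ⨆ x ∈ ({b, c} : Set Q), a * x := mul_sSup a _
    rw [sSup_pair, sup_eq_right.mpr h] at this
    rw [this]
    exact le_biSup (fun x => a * x) (Set.mem_insert b {c})
  have lemul : ∀ a b c : Q, b ≤ c → b * a ≤ c * a := by
    intro a b c h
    have : sSup {b, c} * a = ⨆ x ∈ ({b, c} : Set Q), x * a := sSup_mul a _
    rw [sSup_pair, sup_eq_right.mpr h] at this
    rw [this]
    exact le_biSup (fun x => x * a) (Set.mem_insert b {c})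
  have invmono : ∀ a b : Q, a ≤ b → inv a ≤ inv b := by
    intro a b h
    have : inv (sSup {a, b}) = ⨆ x ∈ ({a, b} : Set Q), inv x := inv_sSup _
    rw [sSup_pair, sup_eq_right.mpr h] at this
    rw [this]
    exact le_biSup (fun x => inv x) (Set.mem_insert a {b})
  have inv_one : inv 1 = 1 := by
    have h : inv (inv 1 * 1) = inv 1 := by rw [inv_mul, inv_inv, mul_one]
    rw [mul_one, inv_inv] at h
    exact h.symm
  -- inv (1 ⊓ e) = 1 ⊓ e
  have hinv1e : inv (1 ⊓ e) = 1 ⊓ e := by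
    have h1 : inv (1 ⊓ e) ≤ 1 ⊓ e := le_inf
      ((invmono _ _ inf_le_left).trans_eq inv_one)
      ((invmono _ _ inf_le_right).trans_eq he)
    have h2 : 1 ⊓ e ≤ inv (1 ⊓ e) := by
      calc 1 ⊓ e = inv (inv (1 ⊓ e)) := (inv_inv _).symm
        _ ≤ inv (1 ⊓ e) := invmono _ _ h1
    exact le_antisymm h1 h2
  -- g * f° = 1 ⊓ e
  have hgf : g * inv f = 1 ⊓ e := by
    have := congrArg inv hfg
    rw [inv_mul, inv_inv, hinv1e] at this
    exact this
  have h1 : g ≤ e * f := by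
    calc g = g * 1 := (mul_one g).symm
      _ ≤ g * (inv f * f) := mulle _ _ _ hf'
      _ = (g * inv f) * f := (mul_assoc _ _ _).symm
      _ = (1 ⊓ e) * f := by rw [hgf]
      _ ≤ e * f := lemul _ _ _ inf_le_right
  have h2 : f ≤ e * g := by
    calc f = f * 1 := (mul_one f).symm
      _ ≤ f * (inv g * g) := mulle _ _ _ hg'
      _ = (f * inv g) * g := (mul_assoc _ _ _).symm
      _ = (1 ⊓ e) * g := by rw [hfg]
      _ ≤ e * g := lemul _ _ _ inf_le_right
  have h3 : g ≤ e * g := by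
    calc g ≤ e * f := h1
      _ ≤ e * (e * g) := mulle _ _ _ h2
      _ = (e * e) * g := (mul_assoc _ _ _).symm
      _ = e * g := by rw [hee]
  have h4 : e * g = e * f := by
    apply le_antisymm
    · calc e * g ≤ e * (e * f) := mulle _ _ _ h1
        _ = (e * e) * f := (mul_assoc _ _ _).symm
        _ = e * f := by rw [hee]
    · calc e * f ≤ e * (e * g) := mulle _ _ _ h2
        _ = (e * e) * g := (mul_assoc _ _ _).symm
        _ = e * g := by rw [hee]
  exact ⟨h1, h2, h3, h4⟩
end

section
/- In a modular quantale, if t is a symmetric monad (1 ≤ t, t*t = t, t° = t) that splits as t = h°*h with h*h° = 1, and e is a symmetric idempotent with e = (e*g)*(e*g)° and t = (e*g)°*(e*g), then e splits symmetrically via p := h*(e*g)° and q := p°: that is, q*p = e and p*q = 1. -/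
theorem stmt_19 {Q : Type*} [CompleteLattice Q] [Monoid Q]
    (inv : Q → Q)
    (inv_mul : ∀ a b : Q, inv (a * b) = inv b * inv a)
    (inv_inv : ∀ a : Q, inv (inv a) = a)
    (inv_sSup : ∀ S : Set Q, inv (sSup S) = ⨆ a ∈ S, inv a)
    (mul_sSup : ∀ (a : Q) (S : Set Q), a * sSup S = ⨆ b ∈ S, a * b)
    (sSup_mul : ∀ (a : Q) (S : Set Q), sSup S * a = ⨆ b ∈ S, b * a)
    (modular : ∀ f g h : Q, g * f ⊓ h ≤ g * (f ⊓ inv g * h))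
    : ∀ e g h t : Q, e * e = e → inv e = e →
      1 ≤ t → t * t = t → inv t = t →
      t = inv h * h → h * inv h = 1 →
      e = (e * g) * inv (e * g) → t = inv (e * g) * (e * g) →
      inv (h * inv (e * g)) * (h * inv (e * g)) = e ∧
      (h * inv (e * g)) * inv (h * inv (e * g)) = 1 := by
  intro e g h t he hie ht1 htt hit hth hhh hef htf
  set f := e * g with hf
  have h1 : inv (h * inv f) = f * inv h := by rw [inv_mul, inv_inv]
  constructor
  · rw [h1]
    calc f * inv h * (h * inv f) = f * (inv h * h) * inv f := by
          simp [mul_assoc]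
      _ = f * (inv f * f) * inv f := by rw [← hth, htf]
      _ = (f * inv f) * (f * inv f) := by simp [mul_assoc]
      _ = e := by rw [← hef, he]
  · rw [h1]
    calc h * inv f * (f * inv h) = h * (inv f * f) * inv h := by
          simp [mul_assoc]
      _ = h * (inv h * h) * inv h := by rw [← htf, hth]
      _ = (h * inv h) * (h * inv h) := by simp [mul_assoc]
      _ = 1 := by rw [hhh, one_mul]
end
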